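/- Let L, λ > 0, let a, Ψ₁, Ψ₂ : ℝ → ℝ be continuous, and let g₁, g₂ : ℝ → ℝ be continuous. Suppose ŵ : ℝ² → ℝ is C^∞ (arguments (x,t)) and satisfies, for all x ∈ [0,L] and t ≥ 0: ŵ_t + ŵ_x + ŵ_{xxx} + λ ŵ = a(x) ŵ_x(0,t) - Ψ₁(x) g₁(t) - Ψ₂(x) g₂(t), together with ŵ(0,t) = ŵ(L,t) = ŵ_x(L,t) = 0. Then for every ε > 0 and every t ≥ 0: (1/2) d/dt ∫_0^L ŵ(x,t)² dx + κ_ε ∫_0^L ŵ(x,t)² dx ≤ (1/(2ε)) ( g₁(t)² + g₂(t)² ), where κ_ε := λ - (1/2) ∫_0^L a(x)² dx - (ε/2) ( ∫_0^L Ψ₁(x)² dx + ∫_0^L Ψ₂(x)² dx ). -/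

import Mathlib

open MeasureTheory Real

/-- Partial derivative in the first variable. -/
noncomputable def pd1 (f : ℝ × ℝ → ℝ) : ℝ × ℝ → ℝ := fun q => deriv (fun s => f (s, q.2)) q.1

/-- Partial derivative in the second variable. -/
noncomputable def pd2 (f : ℝ × ℝ → ℝ) : ℝ × ℝ → ℝ := fun q => deriv (fun s => f (q.1, s)) q.2

lemma hasDerivAt_slice1 {f : ℝ × ℝ → ℝ} (hf : ContDiff ℝ (⊤ : ℕ∞) f) (x t : ℝ) :
    HasDerivAt (fun s => f (s, t)) (pd1 f (x, t)) x := by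
  have h1 : HasDerivAt (fun s : ℝ => (s, t)) ((1 : ℝ), (0 : ℝ)) x :=
    (hasDerivAt_id x).prodMk (hasDerivAt_const x t)
  have h2 : HasDerivAt (fun s => f (s, t)) (fderiv ℝ f (x, t) (1, 0)) x :=
    ((hf.differentiable (by simp) (x, t)).hasFDerivAt).comp_hasDerivAt x h1
  exact h2.differentiableAt.hasDerivAt

lemma hasDerivAt_slice2 {f : ℝ × ℝ → ℝ} (hf : ContDiff ℝ (⊤ : ℕ∞) f) (x t : ℝ) :
    HasDerivAt (fun s => f (x, s)) (pd2 f (x, t)) t := by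
  have h1 : HasDerivAt (fun s : ℝ => (x, s)) ((0 : ℝ), (1 : ℝ)) t :=
    (hasDerivAt_const t x).prodMk (hasDerivAt_id t)
  have h2 : HasDerivAt (fun s => f (x, s)) (fderiv ℝ f (x, t) (0, 1)) t :=
    ((hf.differentiable (by simp) (x, t)).hasFDerivAt).comp_hasDerivAt t h1
  exact h2.differentiableAt.hasDerivAt

lemma pd1_eq_fderiv {f : ℝ × ℝ → ℝ} (hf : ContDiff ℝ (⊤ : ℕ∞) f) :
    pd1 f = fun q => fderiv ℝ f q (1, 0) := by
  funext q
  have h1 : HasDerivAt (fun s : ℝ => (s, q.2)) ((1 : ℝ), (0 : ℝ)) q.1 :=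
    (hasDerivAt_id q.1).prodMk (hasDerivAt_const q.1 q.2)
  have h2 : HasDerivAt (fun s => f (s, q.2)) (fderiv ℝ f (q.1, q.2) (1, 0)) q.1 :=
    ((hf.differentiable (by simp) (q.1, q.2)).hasFDerivAt).comp_hasDerivAt q.1 h1
  simpa [pd1] using h2.deriv

lemma pd2_eq_fderiv {f : ℝ × ℝ → ℝ} (hf : ContDiff ℝ (⊤ : ℕ∞) f) :
    pd2 f = fun q => fderiv ℝ f q (0, 1) := by
  funext q
  have h1 : HasDerivAt (fun s : ℝ => (q.1, s)) ((0 : ℝ), (1 : ℝ)) q.2 :=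
    (hasDerivAt_const q.2 q.1).prodMk (hasDerivAt_id q.2)
  have h2 : HasDerivAt (fun s => f (q.1, s)) (fderiv ℝ f (q.1, q.2) (0, 1)) q.2 :=
    ((hf.differentiable (by simp) (q.1, q.2)).hasFDerivAt).comp_hasDerivAt q.2 h1
  simpa [pd2] using h2.deriv

lemma contDiff_pd1 {f : ℝ × ℝ → ℝ} (hf : ContDiff ℝ (⊤ : ℕ∞) f) : ContDiff ℝ (⊤ : ℕ∞) (pd1 f) := by
  rw [pd1_eq_fderiv hf]
  exact (hf.fderiv_right (by simp)).clm_apply contDiff_const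

lemma contDiff_pd2 {f : ℝ × ℝ → ℝ} (hf : ContDiff ℝ (⊤ : ℕ∞) f) : ContDiff ℝ (⊤ : ℕ∞) (pd2 f) := by
  rw [pd2_eq_fderiv hf]
  exact (hf.fderiv_right (by simp)).clm_apply contDiff_const

lemma cs_interval {f g : ℝ → ℝ} (hf : Continuous f) (hg : Continuous g) {L : ℝ} (hL : 0 ≤ L) :
    (∫ x in (0:ℝ)..L, f x * g x) ^ 2
      ≤ (∫ x in (0:ℝ)..L, f x ^ 2) * ∫ x in (0:ℝ)..L, g x ^ 2 := by
  set A := ∫ x in (0:ℝ)..L, f x ^ 2 with hA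
  set B := ∫ x in (0:ℝ)..L, f x * g x with hB
  set C := ∫ x in (0:ℝ)..L, g x ^ 2 with hC
  have key : ∀ r : ℝ, 0 ≤ A * (r * r) + (2 * B) * r + C := by
    intro r
    have h1 : (0:ℝ) ≤ ∫ x in (0:ℝ)..L, (r * f x + g x) ^ 2 :=
      intervalIntegral.integral_nonneg hL (fun x _ => sq_nonneg _)
    have h2 : (∫ x in (0:ℝ)..L, (r * f x + g x) ^ 2)
        = A * (r * r) + (2 * B) * r + C := by
      have : ∀ x : ℝ, (r * f x + g x) ^ 2
          = (r * r) * f x ^ 2 + (2 * r) * (f x * g x) + g x ^ 2 := fun x => by ring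
      rw [intervalIntegral.integral_congr (g := fun x =>
        (r * r) * f x ^ 2 + (2 * r) * (f x * g x) + g x ^ 2) (fun x _ => this x)]
      rw [intervalIntegral.integral_add, intervalIntegral.integral_add,
        intervalIntegral.integral_const_mul, intervalIntegral.integral_const_mul]
      · ring
      · exact (continuous_const.mul (hf.pow 2)).intervalIntegrable _ _
      · exact (continuous_const.mul (hf.mul hg)).intervalIntegrable _ _
      · exact ((continuous_const.mul (hf.pow 2)).add (continuous_const.mul (hf.mul hg))).intervalIntegrable _ _
      · exact (hg.pow 2).intervalIntegrable _ _
    linarith [h2 ▸ h1]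
  have hd := discrim_le_zero key
  rw [discrim] at hd
  nlinarith [hd]
section aux

lemma integral_lincomb6 (c1 c2 c3 c4 c5 c6 : ℝ) (f1 f2 f3 f4 f5 f6 : ℝ → ℝ)
    (h1 : Continuous f1) (h2 : Continuous f2) (h3 : Continuous f3)
    (h4 : Continuous f4) (h5 : Continuous f5) (h6 : Continuous f6) (A B : ℝ) :
    (∫ x in A..B, (c1 * f1 x + c2 * f2 x + c3 * f3 x + c4 * f4 x + c5 * f5 x + c6 * f6 x))
      = c1 * (∫ x in A..B, f1 x) + c2 * (∫ x in A..B, f2 x) + c3 * (∫ x in A..B, f3 x)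
        + c4 * (∫ x in A..B, f4 x) + c5 * (∫ x in A..B, f5 x) + c6 * (∫ x in A..B, f6 x) := by
  have i1 : IntervalIntegrable (fun x => c1 * f1 x) volume A B := ((continuous_const.mul h1 : Continuous fun x => c1 * f1 x)).intervalIntegrable (μ := volume) A B
  have i2 : IntervalIntegrable (fun x => c2 * f2 x) volume A B := ((continuous_const.mul h2 : Continuous fun x => c2 * f2 x)).intervalIntegrable (μ := volume) A B
  have i3 : IntervalIntegrable (fun x => c3 * f3 x) volume A B := ((continuous_const.mul h3 : Continuous fun x => c3 * f3 x)).intervalIntegrable (μ := volume) A B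
  have i4 : IntervalIntegrable (fun x => c4 * f4 x) volume A B := ((continuous_const.mul h4 : Continuous fun x => c4 * f4 x)).intervalIntegrable (μ := volume) A B
  have i5 : IntervalIntegrable (fun x => c5 * f5 x) volume A B := ((continuous_const.mul h5 : Continuous fun x => c5 * f5 x)).intervalIntegrable (μ := volume) A B
  have i6 : IntervalIntegrable (fun x => c6 * f6 x) volume A B := ((continuous_const.mul h6 : Continuous fun x => c6 * f6 x)).intervalIntegrable (μ := volume) A B
  rw [intervalIntegral.integral_add ((((i1.add i2).add i3).add i4).add i5) i6,
    intervalIntegral.integral_add (((i1.add i2).add i3).add i4) i5,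
    intervalIntegral.integral_add ((i1.add i2).add i3) i4,
    intervalIntegral.integral_add (i1.add i2) i3,
    intervalIntegral.integral_add i1 i2,
    intervalIntegral.integral_const_mul, intervalIntegral.integral_const_mul,
    intervalIntegral.integral_const_mul, intervalIntegral.integral_const_mul,
    intervalIntegral.integral_const_mul, intervalIntegral.integral_const_mul]

end aux

set_option maxHeartbeats 1000000 in
/-- energy inequality for the observer target system with source terms. -/
theorem stmt_11 (L lam : ℝ) (hL : 0 < L) (hlam : 0 < lam)
    (a Ψ₁ Ψ₂ : ℝ → ℝ) (ha : Continuous a) (hΨ₁ : Continuous Ψ₁) (hΨ₂ : Continuous Ψ₂)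
    (g₁ g₂ : ℝ → ℝ) (hg₁ : Continuous g₁) (hg₂ : Continuous g₂)
    (w : ℝ × ℝ → ℝ) (hw : ContDiff ℝ (⊤ : ℕ∞) w)
    (hpde : ∀ x t : ℝ, 0 ≤ x → x ≤ L → 0 ≤ t →
      pd2 w (x, t) + pd1 w (x, t) + pd1 (pd1 (pd1 w)) (x, t) + lam * w (x, t)
        = a x * pd1 w (0, t) - Ψ₁ x * g₁ t - Ψ₂ x * g₂ t)
    (hbc0 : ∀ t : ℝ, 0 ≤ t → w (0, t) = 0)
    (hbcL : ∀ t : ℝ, 0 ≤ t → w (L, t) = 0)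
    (hbcLx : ∀ t : ℝ, 0 ≤ t → pd1 w (L, t) = 0) :
    ∀ ε : ℝ, 0 < ε → ∀ t : ℝ, 0 ≤ t →
      (1 / 2) * deriv (fun τ => ∫ x in (0:ℝ)..L, w (x, τ) ^ 2) t
          + (lam - (1 / 2) * (∫ x in (0:ℝ)..L, a x ^ 2)
              - (ε / 2) * ((∫ x in (0:ℝ)..L, Ψ₁ x ^ 2) + ∫ x in (0:ℝ)..L, Ψ₂ x ^ 2)) *
            ∫ x in (0:ℝ)..L, w (x, t) ^ 2
        ≤ (1 / (2 * ε)) * (g₁ t ^ 2 + g₂ t ^ 2) := by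
  intro ε hε t ht
  have hL' : (0:ℝ) ≤ L := hL.le
  have hw1 : ContDiff ℝ (⊤ : ℕ∞) (pd1 w) := contDiff_pd1 hw
  have hw2 : ContDiff ℝ (⊤ : ℕ∞) (pd1 (pd1 w)) := contDiff_pd1 hw1
  have hw3 : ContDiff ℝ (⊤ : ℕ∞) (pd1 (pd1 (pd1 w))) := contDiff_pd1 hw2
  have hwt : ContDiff ℝ (⊤ : ℕ∞) (pd2 w) := contDiff_pd2 hw
  have hcw : Continuous w := hw.continuous
  have hc1 : Continuous (pd1 w) := hw1.continuous
  have hc2 : Continuous (pd1 (pd1 w)) := hw2.continuous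
  have hc3 : Continuous (pd1 (pd1 (pd1 w))) := hw3.continuous
  have hct : Continuous (pd2 w) := hwt.continuous
  have slc : ∀ (f : ℝ × ℝ → ℝ), Continuous f → ∀ τ : ℝ, Continuous (fun x => f (x, τ)) :=
    fun f hf τ => hf.comp (continuous_id.prodMk continuous_const)
  have s0 : ∀ x : ℝ, HasDerivAt (fun s => w (s, t)) (pd1 w (x, t)) x :=
    fun x => hasDerivAt_slice1 hw x t
  have s1 : ∀ x : ℝ, HasDerivAt (fun s => pd1 w (s, t)) (pd1 (pd1 w) (x, t)) x :=
    fun x => hasDerivAt_slice1 hw1 x t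
  have s2 : ∀ x : ℝ, HasDerivAt (fun s => pd1 (pd1 w) (s, t)) (pd1 (pd1 (pd1 w)) (x, t)) x :=
    fun x => hasDerivAt_slice1 hw2 x t
  -- Step A: differentiate under the integral sign
  have hGcont : Continuous (fun q : ℝ × ℝ => 2 * w q * pd2 w q) :=
    (continuous_const.mul hcw).mul hct
  obtain ⟨C, hC⟩ := ((isCompact_uIcc (a := (0:ℝ)) (b := L)).prod
    (isCompact_closedBall t 1)).exists_bound_of_continuousOn hGcont.continuousOn
  have hDeriv : HasDerivAt (fun τ => ∫ x in (0:ℝ)..L, w (x, τ) ^ 2)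
      (∫ x in (0:ℝ)..L, 2 * w (x, t) * pd2 w (x, t)) t := by
    refine (intervalIntegral.hasDerivAt_integral_of_dominated_loc_of_deriv_le
      (F := fun τ x => w (x, τ) ^ 2) (F' := fun τ x => 2 * w (x, τ) * pd2 w (x, τ))
      (bound := fun _ => C) (s := Metric.ball t 1) (Metric.ball_mem_nhds t one_pos) ?_ ?_ ?_ ?_ ?_ ?_).2
    · exact Filter.Eventually.of_forall fun τ =>
        ((slc w hcw τ).pow 2).aestronglyMeasurable
    · exact ((slc w hcw t).pow 2).intervalIntegrable _ _
    · exact ((continuous_const.mul (slc w hcw t)).mul (slc (pd2 w) hct t)).aestronglyMeasurable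
    · refine Filter.Eventually.of_forall fun x hx τ hτ => ?_
      exact hC (x, τ) ⟨Set.uIoc_subset_uIcc hx, Metric.ball_subset_closedBall hτ⟩
    · exact intervalIntegrable_const
    · refine Filter.Eventually.of_forall fun x hx τ hτ => ?_
      simpa using (hasDerivAt_slice2 hw x τ).fun_pow 2
  -- Step B: integrate the PDE multiplied by 2w
  set E := ∫ x in (0:ℝ)..L, w (x, t) ^ 2 with hE
  set b := pd1 w (0, t) with hb
  set Ia := ∫ x in (0:ℝ)..L, a x * w (x, t) with hIa
  set I1 := ∫ x in (0:ℝ)..L, Ψ₁ x * w (x, t) with hI1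
  set I2 := ∫ x in (0:ℝ)..L, Ψ₂ x * w (x, t) with hI2
  have hint_eq : (∫ x in (0:ℝ)..L, 2 * w (x, t) * pd2 w (x, t))
      = (-2) * (∫ x in (0:ℝ)..L, w (x, t) * pd1 w (x, t))
        + (-2) * (∫ x in (0:ℝ)..L, w (x, t) * pd1 (pd1 (pd1 w)) (x, t))
        + (-2 * lam) * E
        + (2 * b) * Ia + (-2 * g₁ t) * I1 + (-2 * g₂ t) * I2 := by
    have hcong : ∀ x ∈ Set.uIcc (0:ℝ) L,
        2 * w (x, t) * pd2 w (x, t)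
          = (-2) * (w (x, t) * pd1 w (x, t))
            + (-2) * (w (x, t) * pd1 (pd1 (pd1 w)) (x, t))
            + (-2 * lam) * (w (x, t) ^ 2)
            + (2 * b) * (a x * w (x, t)) + (-2 * g₁ t) * (Ψ₁ x * w (x, t))
            + (-2 * g₂ t) * (Ψ₂ x * w (x, t)) := by
      intro x hx
      rw [Set.uIcc_of_le hL'] at hx
      have h := hpde x t hx.1 hx.2 ht
      rw [hb]; linear_combination (2 * w (x, t)) * h
    rw [intervalIntegral.integral_congr hcong]
    exact integral_lincomb6 _ _ _ _ _ _ _ _ _ _ _ _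
      ((slc w hcw t).mul (slc (pd1 w) hc1 t))
      ((slc w hcw t).mul (slc (pd1 (pd1 (pd1 w))) hc3 t))
      ((slc w hcw t).pow 2)
      (ha.mul (slc w hcw t)) (hΨ₁.mul (slc w hcw t)) (hΨ₂.mul (slc w hcw t)) 0 L
  -- Step C: ∫ w w_x = 0
  have ibp1 : (∫ x in (0:ℝ)..L, w (x, t) * pd1 w (x, t)) = 0 := by
    have h : ∀ x ∈ Set.uIcc (0:ℝ) L,
        HasDerivAt (fun s => w (s, t) ^ 2 / 2) (w (x, t) * pd1 w (x, t)) x := by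
      intro x _
      have h2 := ((s0 x).fun_pow 2).div_const 2
      refine h2.congr_deriv ?_
      push_cast
      ring
    rw [intervalIntegral.integral_eq_sub_of_hasDerivAt h
      (((slc w hcw t).mul (slc (pd1 w) hc1 t)).intervalIntegrable _ _), hbcL t ht, hbc0 t ht]
    norm_num
  -- Step D: ∫ w w_xxx = b^2/2
  have ibp3 : (∫ x in (0:ℝ)..L, w (x, t) * pd1 (pd1 (pd1 w)) (x, t)) = b ^ 2 / 2 := by
    have h : ∀ x ∈ Set.uIcc (0:ℝ) L,
        HasDerivAt (fun s => w (s, t) * pd1 (pd1 w) (s, t) - pd1 w (s, t) ^ 2 / 2)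
          (w (x, t) * pd1 (pd1 (pd1 w)) (x, t)) x := by
      intro x _
      have h2 := ((s0 x).mul (s2 x)).sub (((s1 x).fun_pow 2).div_const 2)
      refine h2.congr_deriv ?_
      push_cast
      ring
    rw [intervalIntegral.integral_eq_sub_of_hasDerivAt h
      (((slc w hcw t).mul (slc (pd1 (pd1 (pd1 w))) hc3 t)).intervalIntegrable _ _),
      hbcL t ht, hbc0 t ht, hbcLx t ht, hb]
    ring
  -- Cauchy–Schwarz
  have csA : Ia ^ 2 ≤ (∫ x in (0:ℝ)..L, a x ^ 2) * E :=
    cs_interval ha (slc w hcw t) hL'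
  have cs1 : I1 ^ 2 ≤ (∫ x in (0:ℝ)..L, Ψ₁ x ^ 2) * E :=
    cs_interval hΨ₁ (slc w hcw t) hL'
  have cs2 : I2 ^ 2 ≤ (∫ x in (0:ℝ)..L, Ψ₂ x ^ 2) * E :=
    cs_interval hΨ₂ (slc w hcw t) hL'
  -- Young inequalities
  have y0 : b * Ia ≤ b ^ 2 / 2 + Ia ^ 2 / 2 := by nlinarith [sq_nonneg (b - Ia)]
  have y1 : -(g₁ t * I1) ≤ (1 / (2 * ε)) * g₁ t ^ 2 + (ε / 2) * I1 ^ 2 := by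
    have hkey : (1 / (2 * ε)) * (g₁ t + ε * I1) ^ 2
        = (1 / (2 * ε)) * g₁ t ^ 2 + (ε / 2) * I1 ^ 2 + g₁ t * I1 := by
      field_simp
      ring
    nlinarith [mul_nonneg (by positivity : (0:ℝ) ≤ 1 / (2 * ε)) (sq_nonneg (g₁ t + ε * I1))]
  have y2 : -(g₂ t * I2) ≤ (1 / (2 * ε)) * g₂ t ^ 2 + (ε / 2) * I2 ^ 2 := by
    have hkey : (1 / (2 * ε)) * (g₂ t + ε * I2) ^ 2
        = (1 / (2 * ε)) * g₂ t ^ 2 + (ε / 2) * I2 ^ 2 + g₂ t * I2 := by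
      field_simp
      ring
    nlinarith [mul_nonneg (by positivity : (0:ℝ) ≤ 1 / (2 * ε)) (sq_nonneg (g₂ t + ε * I2))]
  clear_value E b Ia I1 I2
  -- put everything together
  have m1 := mul_le_mul_of_nonneg_left csA (by norm_num : (0:ℝ) ≤ 1 / 2)
  have m2 := mul_le_mul_of_nonneg_left cs1 (by positivity : (0:ℝ) ≤ ε / 2)
  have m3 := mul_le_mul_of_nonneg_left cs2 (by positivity : (0:ℝ) ≤ ε / 2)
  have A1 : -(b ^ 2) / 2 + b * Ia - 1 / 2 * ((∫ x in (0:ℝ)..L, a x ^ 2) * E) ≤ 0 := by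
    linarith [y0, m1]
  have A2 : -(g₁ t * I1) ≤ (1 / (2 * ε)) * g₁ t ^ 2 + ε / 2 * ((∫ x in (0:ℝ)..L, Ψ₁ x ^ 2) * E) := by
    linarith [y1, m2]
  have A3 : -(g₂ t * I2) ≤ (1 / (2 * ε)) * g₂ t ^ 2 + ε / 2 * ((∫ x in (0:ℝ)..L, Ψ₂ x ^ 2) * E) := by
    linarith [y2, m3]
  rw [hDeriv.deriv, hint_eq, ibp1, ibp3]
  have hsplit : (lam - 1 / 2 * (∫ x in (0:ℝ)..L, a x ^ 2)
        - ε / 2 * ((∫ x in (0:ℝ)..L, Ψ₁ x ^ 2) + ∫ x in (0:ℝ)..L, Ψ₂ x ^ 2)) * E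
      = lam * E - 1 / 2 * ((∫ x in (0:ℝ)..L, a x ^ 2) * E)
        - ε / 2 * ((∫ x in (0:ℝ)..L, Ψ₁ x ^ 2) * E)
        - ε / 2 * ((∫ x in (0:ℝ)..L, Ψ₂ x ^ 2) * E) := by ring
  rw [hsplit]
  linarith [A1, A2, A3]
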